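/- arXiv:2403.01947 — 4 statements merged into one kernel-verified Lean document; each statement's English description precedes it below -/
import Mathlib

section
/- Let G be a split graph with split partition K ⊎ S. Then G is a Helly circular-arc graph if and only if the auxiliary graph G^K is an interval graph. -/
namespace CAG

variable {V : Type*}

/-- The circle on which circular-arc models live. -/
abbrev Circle : Type := AddCircle (1 : ℝ)

/-- The closed arc of the circle starting at `s` and going a length `ℓ` in the
positive direction. -/
def circleArc (s ℓ : ℝ) : Set Circle :=
  (fun x : ℝ => (x : Circle)) '' Set.Icc s (s + ℓ)

/-- A circular-arc model of a graph `G`: an assignment of nonempty closed arcs of the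
circle to vertices such that two distinct vertices are adjacent iff their arcs meet. -/
structure CircularArcModel (G : SimpleGraph V) where
  arc : V → Set Circle
  isArc : ∀ v : V, ∃ s ℓ : ℝ, 0 ≤ ℓ ∧ arc v = circleArc s ℓ
  adj_iff : ∀ u v : V, u ≠ v → (G.Adj u v ↔ (arc u ∩ arc v).Nonempty)

/-- A graph is a circular-arc graph if it has a circular-arc model. -/
def IsCircularArcGraph (G : SimpleGraph V) : Prop := Nonempty (CircularArcModel G)

/-- An interval model of a graph `G`: an assignment of nonempty closed real intervals
to vertices such that two distinct vertices are adjacent iff their intervals meet. -/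
structure IntervalModel (G : SimpleGraph V) where
  lo : V → ℝ
  hi : V → ℝ
  lo_le_hi : ∀ v : V, lo v ≤ hi v
  adj_iff : ∀ u v : V, u ≠ v →
    (G.Adj u v ↔ (Set.Icc (lo u) (hi u) ∩ Set.Icc (lo v) (hi v)).Nonempty)

/-- The interval assigned to a vertex by an interval model. -/
def IntervalModel.ival {G : SimpleGraph V} (M : IntervalModel G) (v : V) : Set ℝ :=
  Set.Icc (M.lo v) (M.hi v)

/-- A graph is an interval graph if it has an interval model. -/
def IsIntervalGraph (G : SimpleGraph V) : Prop := Nonempty (IntervalModel G)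

/-- The closed neighbourhood `N[v]` of a vertex. -/
def closedNbhd (G : SimpleGraph V) (v : V) : Set V := insert v (G.neighborSet v)

/-- A vertex is simplicial if its closed neighbourhood is a clique. -/
def IsSimplicial (G : SimpleGraph V) (v : V) : Prop := G.IsClique (closedNbhd G v)

/-- The cycle graph on `n` vertices. -/
def cycleG (n : ℕ) : SimpleGraph (Fin n) :=
  SimpleGraph.fromRel (fun a b => (a.val + 1) % n = b.val)

/-- `G` contains an induced copy of `F`. -/
def InducedCopy {W : Type*} (F : SimpleGraph W) (G : SimpleGraph V) : Prop :=
  Nonempty (F ↪g G)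

/-- A graph is chordal if it has no induced cycle of length at least 4. -/
def Chordal (G : SimpleGraph V) : Prop :=
  ∀ n : ℕ, 4 ≤ n → ¬ InducedCopy (cycleG n) G

/-- The adjacency relation of the auxiliary graph `G^K`. -/
def auxAdj (G : SimpleGraph V) (K : Set V) (u v : V) : Prop :=
  (u ∈ K ∧ v ∈ K ∧ G.neighborSet u ∪ G.neighborSet v ≠ Set.univ) ∨
  (u ∉ K ∧ v ∉ K ∧ G.Adj u v) ∨
  (u ∈ K ∧ v ∉ K ∧ ¬ closedNbhd G v ⊆ closedNbhd G u) ∨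
  (v ∈ K ∧ u ∉ K ∧ ¬ closedNbhd G u ⊆ closedNbhd G v)

/-- The auxiliary graph `G^K` associated with a graph `G` and a clique `K`. -/
def auxGraph (G : SimpleGraph V) (K : Set V) : SimpleGraph V where
  Adj u v := u ≠ v ∧ auxAdj G K u v
  symm := ⟨by
    rintro u v ⟨hne, h⟩
    refine ⟨hne.symm, ?_⟩
    rcases h with ⟨h1, h2, h3⟩ | ⟨h1, h2, h3⟩ | ⟨h1, h2, h3⟩ | ⟨h1, h2, h3⟩
    · exact Or.inl ⟨h2, h1, by rwa [Set.union_comm]⟩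
    · exact Or.inr <| Or.inl ⟨h2, h1, h3.symm⟩
    · exact Or.inr <| Or.inr <| Or.inr ⟨h1, h2, h3⟩
    · exact Or.inr <| Or.inr <| Or.inl ⟨h1, h2, h3⟩⟩
  loopless := ⟨fun _ h => h.1 rfl⟩

/-- Condition (♯): `G^K` admits an interval model in which, for every `v ∈ K` and
`u ∉ K`, the interval of `v` contains the interval of `u` iff `u` and `v` are not
adjacent in `G`. -/
def SatisfiesSharp (G : SimpleGraph V) (K : Set V) : Prop :=
  ∃ M : IntervalModel (auxGraph G K),
    ∀ v ∈ K, ∀ u ∉ K, (M.ival u ⊆ M.ival v ↔ ¬ G.Adj v u)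

/-- An independent set of a graph. -/
def IsIndependentSet (G : SimpleGraph V) (s : Set V) : Prop :=
  ∀ ⦃u⦄, u ∈ s → ∀ ⦃v⦄, v ∈ s → u ≠ v → ¬ G.Adj u v

/-- A split partition: a partition of the vertex set into a clique and an independent set. -/
def IsSplitPartition (G : SimpleGraph V) (K S : Set V) : Prop :=
  K ∪ S = Set.univ ∧ Disjoint K S ∧ G.IsClique K ∧ IsIndependentSet G S

/-- A split graph. -/
def IsSplitGraph (G : SimpleGraph V) : Prop := ∃ K S : Set V, IsSplitPartition G K S

/-- A split graph is ambiguous if it has two distinct split partitions. -/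
def Ambiguous (G : SimpleGraph V) : Prop :=
  ∃ K₁ S₁ K₂ S₂ : Set V, IsSplitPartition G K₁ S₁ ∧ IsSplitPartition G K₂ S₂ ∧
    (K₁, S₁) ≠ (K₂, S₂)

/-- A maximal clique (as a set of vertices). -/
def IsMaxCliqueSet (G : SimpleGraph V) (C : Set V) : Prop :=
  G.IsClique C ∧ ∀ C' : Set V, G.IsClique C' → C ⊆ C' → C = C'

/-- A Helly circular-arc graph: one admitting a circular-arc model in which the arcs of
every maximal clique have a common point. -/
def IsHellyCircularArcGraph (G : SimpleGraph V) : Prop :=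
  ∃ M : CircularArcModel G, ∀ C : Set V, IsMaxCliqueSet G C →
    ∃ p : Circle, ∀ v ∈ C, p ∈ M.arc v

/-- The edge `ab` lies on an induced 4-cycle. -/
def EdgeOnInducedC4 (G : SimpleGraph V) (a b : V) : Prop :=
  ∃ c d : V, a ≠ c ∧ b ≠ d ∧ G.Adj a b ∧ G.Adj b c ∧ G.Adj c d ∧ G.Adj d a ∧
    ¬ G.Adj a c ∧ ¬ G.Adj b d

/-- A normalized circular-arc model. -/
def IsNormalized {G : SimpleGraph V} (M : CircularArcModel G) : Prop :=
  ∀ v₁ v₂ : V, G.Adj v₁ v₂ →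
    (closedNbhd G v₂ ⊆ closedNbhd G v₁ → M.arc v₂ ⊆ M.arc v₁) ∧
    (G.neighborSet v₁ ∪ G.neighborSet v₂ = Set.univ → ¬ EdgeOnInducedC4 G v₁ v₂ →
      M.arc v₁ ∪ M.arc v₂ = Set.univ)

/-- A universal vertex: a vertex adjacent to all other vertices. -/
def HasUniversalVertex (G : SimpleGraph V) : Prop :=
  ∃ v : V, ∀ u : V, u ≠ v → G.Adj v u

/-- `w` is a witness of the set `X ⊆ K`: a vertex of `S` adjacent in `G^K` to all of `X`. -/
def WitnessOf (G : SimpleGraph V) (K S : Set V) (w : V) (X : Set V) : Prop :=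
  w ∈ S ∧ ∀ x ∈ X, (auxGraph G K).Adj w x

/-- A set `X` is witnessed if it has a witness. -/
def Witnessed (G : SimpleGraph V) (K S : Set V) (X : Set V) : Prop :=
  ∃ w : V, WitnessOf G K S w X

/-- The induced subgraph of `G^K` on the vertex set `F` is witnessed: every maximal
clique of this subgraph that is disjoint from `S` is witnessed. -/
def WitnessedCopy (G : SimpleGraph V) (K S F : Set V) : Prop :=
  ∀ C ⊆ F, (auxGraph G K).IsClique C →
    (∀ C' ⊆ F, (auxGraph G K).IsClique C' → C ⊆ C' → C = C') →
    Disjoint C S → Witnessed G K S C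

/-- The sun: a triangle 0,1,2 together with degree-two vertices 3 (adjacent to 0,1),
4 (adjacent to 1,2) and 5 (adjacent to 0,2). -/
def sunF : SimpleGraph (Fin 6) :=
  SimpleGraph.fromRel (fun a b =>
    (a = 0 ∧ b = 1) ∨ (a = 0 ∧ b = 2) ∨ (a = 1 ∧ b = 2) ∨
    (a = 3 ∧ (b = 0 ∨ b = 1)) ∨ (a = 4 ∧ (b = 1 ∨ b = 2)) ∨ (a = 5 ∧ (b = 0 ∨ b = 2)))

/-- The long claw: centre 0 adjacent to 1,2,3; pendant vertices 4,5,6 attached to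
1,2,3 respectively. -/
def longClaw : SimpleGraph (Fin 7) :=
  SimpleGraph.fromRel (fun a b =>
    (a = 0 ∧ (b = 1 ∨ b = 2 ∨ b = 3)) ∨ (a = 1 ∧ b = 4) ∨ (a = 2 ∧ b = 5) ∨ (a = 3 ∧ b = 6))

/-- The whipping top, with vertices v0 = 0, v1 = 1, v2 = 2, v3 = 3, x1 = 4, x2 = 5,
x3 = 6: the path x1-v1-v2-v3-x3, with v0 adjacent to x1, v1, v2, v3, x3 and x2
adjacent exactly to v2. -/
def whippingTop : SimpleGraph (Fin 7) :=
  SimpleGraph.fromRel (fun a b =>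
    (a = 4 ∧ b = 1) ∨ (a = 1 ∧ b = 2) ∨ (a = 2 ∧ b = 3) ∨ (a = 3 ∧ b = 6) ∨
    (a = 0 ∧ (b = 4 ∨ b = 1 ∨ b = 2 ∨ b = 3 ∨ b = 6)) ∨ (a = 5 ∧ b = 2))

/-- The † graph on `p + 4` vertices: an induced path `v_1 … v_p` (the `inl` vertices),
a vertex `u0 = inr 0` adjacent to all `v_i`, and vertices `x1 = inr 1`, `x2 = inr 2`,
`x3 = inr 3` adjacent exactly to `v_1`, `u0`, `v_p` respectively. -/
def dagGraph (p : ℕ) : SimpleGraph (Fin p ⊕ Fin 4) :=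
  SimpleGraph.fromRel (fun a b =>
    match a, b with
    | Sum.inl i, Sum.inl j => j.val = i.val + 1
    | Sum.inr u, Sum.inl j => u = 0 ∨ (u = 1 ∧ j.val = 0) ∨ (u = 3 ∧ j.val + 1 = p)
    | Sum.inr u, Sum.inr w => u = 0 ∧ w = 2
    | _, _ => False)

/-- The ‡ graph on `p + 5` vertices: an induced path `v_1 … v_p` (the `inl` vertices),
adjacent vertices `u1 = inr 0` and `u2 = inr 1` each adjacent to all `v_i`, and
vertices `x1 = inr 2` (adjacent exactly to `v_1, u1`), `x2 = inr 3` (adjacent exactly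
to `u1, u2`) and `x3 = inr 4` (adjacent exactly to `v_p, u2`). -/
def ddagGraph (p : ℕ) : SimpleGraph (Fin p ⊕ Fin 5) :=
  SimpleGraph.fromRel (fun a b =>
    match a, b with
    | Sum.inl i, Sum.inl j => j.val = i.val + 1
    | Sum.inr u, Sum.inl j =>
        u = 0 ∨ u = 1 ∨ (u = 2 ∧ j.val = 0) ∨ (u = 4 ∧ j.val + 1 = p)
    | Sum.inr u, Sum.inr w =>
        (u = 0 ∧ w = 1) ∨ (u = 2 ∧ w = 0) ∨ (u = 3 ∧ (w = 0 ∨ w = 1)) ∨ (u = 4 ∧ w = 1)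
    | _, _ => False)

/-- A graph is a minimal non-interval graph iff it is isomorphic to a hole, the long
claw, the whipping top, a † graph, or a ‡ graph. -/
def IsMinimalNonIntervalGraph {W : Type*} (F : SimpleGraph W) : Prop :=
  (∃ n : ℕ, 4 ≤ n ∧ Nonempty (F ≃g cycleG n)) ∨
  Nonempty (F ≃g longClaw) ∨
  Nonempty (F ≃g whippingTop) ∨
  (∃ p : ℕ, 2 ≤ p ∧ Nonempty (F ≃g dagGraph p)) ∨
  (∃ p : ℕ, 1 ≤ p ∧ Nonempty (F ≃g ddagGraph p))

/-- The `k`-sun: the `inl` vertices form a clique (the even-numbered vertices of the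
cycle of length `2k`), the `inr` vertices are independent, and `inr j` is adjacent to
`inl j` and `inl ((j+1) mod k)`. -/
def sunGraph (k : ℕ) : SimpleGraph (Fin k ⊕ Fin k) :=
  SimpleGraph.fromRel (fun a b =>
    match a, b with
    | Sum.inl _, Sum.inl _ => True
    | Sum.inl i, Sum.inr j => i = j ∨ i.val = (j.val + 1) % k
    | _, _ => False)

/-- The graph `\overline{S_k}^+`: the complement of the `k`-sun together with a new
vertex (`none`) adjacent exactly to the `k` vertices forming a clique in the
complement (the `inr` vertices). -/
def sunComplPlus (k : ℕ) : SimpleGraph (Option (Fin k ⊕ Fin k)) :=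
  SimpleGraph.fromRel (fun a b =>
    match a, b with
    | some x, some y => (sunGraph k)ᶜ.Adj x y
    | some (Sum.inr _), none => True
    | _, _ => False)

/-- The graph `S^1_k`: the disjoint union of a sun and the gadget `D_k`, with two
triangle vertices of the sun identified with `v_1` and `v_k` of the gadget, plus all
edges between `{v_2, …, v_{k-1}}` and the four remaining sun vertices.  Here the
`inl` vertices are the gadget clique `v_1 … v_k` (0-based), `inr (inl a)` is the
gadget independent vertex `w_{a+1}`, and `inr (inr t)` for `t = 0,1,2,3` are the
third triangle vertex, and the three degree-two sun vertices adjacent (in the sun) to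
`{v_1,v_k}`, `{v_1,t}`, `{v_k,t}` respectively. -/
def S1 (k : ℕ) : SimpleGraph (Fin k ⊕ (Fin (k - 1) ⊕ Fin 4)) :=
  SimpleGraph.fromRel (fun x y =>
    match x, y with
    | Sum.inl _, Sum.inl _ => True
    | Sum.inr (Sum.inl a), Sum.inl b => b.val ≠ a.val ∧ b.val ≠ a.val + 1
    | Sum.inr (Sum.inr t), Sum.inl b =>
        t = 0 ∨ t = 1 ∨ (t = 2 ∧ b.val + 1 ≠ k) ∨ (t = 3 ∧ b.val ≠ 0)
    | Sum.inr (Sum.inr t), Sum.inr (Sum.inr t') => t = 0 ∧ (t' = 2 ∨ t' = 3)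
    | _, _ => False)

/-- The graph `S^2_k`: the disjoint union of a rising sun and the gadget `D_k`, with
the two degree-five vertices of the rising sun identified with `v_1` and `v_k` of the
gadget, plus all edges between `{v_2, …, v_{k-1}}` and the five remaining rising-sun
vertices.  Here the `inl` vertices are the gadget clique `v_1 … v_k` (0-based),
`inr (inl a)` is the gadget independent vertex `w_{a+1}`, and `inr (inr t)` for
`t = 0,…,4` are `d1`, `d2`, `x1`, `x2`, `x3` of the rising sun. -/
def S2 (k : ℕ) : SimpleGraph (Fin k ⊕ (Fin (k - 1) ⊕ Fin 5)) :=
  SimpleGraph.fromRel (fun x y =>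
    match x, y with
    | Sum.inl _, Sum.inl _ => True
    | Sum.inr (Sum.inl a), Sum.inl b => b.val ≠ a.val ∧ b.val ≠ a.val + 1
    | Sum.inr (Sum.inr t), Sum.inl b =>
        t = 0 ∨ t = 1 ∨ (t = 2 ∧ b.val + 1 ≠ k) ∨ t = 3 ∨ (t = 4 ∧ b.val ≠ 0)
    | Sum.inr (Sum.inr t), Sum.inr (Sum.inr t') =>
        (t = 0 ∧ t' = 1) ∨ (t = 0 ∧ t' = 2) ∨ (t = 1 ∧ t' = 4)
    | _, _ => False)

/-- The graph `F1` on 10 vertices: a clique `{0,1,2,3}` (= `v0,…,v3`), vertices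
`x1 = 4, x2 = 5, x3 = 6` where `x_i` is adjacent exactly to `v0` and the two `v_j`
with `j ∈ {1,2,3} \ {i}`, and vertices `w1 = 7, w2 = 8, w3 = 9` where `w_i` is
adjacent exactly to the two `v_j` with `j ∈ {1,2,3} \ {i}`. -/
def F1 : SimpleGraph (Fin 10) :=
  SimpleGraph.fromRel (fun a b =>
    (a.val < 4 ∧ b.val < 4) ∨
    (a = 4 ∧ (b = 0 ∨ b = 2 ∨ b = 3)) ∨
    (a = 5 ∧ (b = 0 ∨ b = 1 ∨ b = 3)) ∨
    (a = 6 ∧ (b = 0 ∨ b = 1 ∨ b = 2)) ∨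
    (a = 7 ∧ (b = 2 ∨ b = 3)) ∨
    (a = 8 ∧ (b = 1 ∨ b = 3)) ∨
    (a = 9 ∧ (b = 1 ∨ b = 2)))

/-- The graph `F2` on 9 vertices: a clique `{0,1,2,3}` (= `v0,…,v3`) together with
`x1 = 4` adjacent exactly to `v2, v3`; `x2 = 5` adjacent exactly to `v0, v1, v3`;
`x3 = 6` adjacent exactly to `v1, v2`; `w1 = 7` adjacent exactly to `v3`; and
`w2 = 8` adjacent exactly to `v1`. -/
def F2 : SimpleGraph (Fin 9) :=
  SimpleGraph.fromRel (fun a b =>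
    (a.val < 4 ∧ b.val < 4) ∨
    (a = 4 ∧ (b = 2 ∨ b = 3)) ∨
    (a = 5 ∧ (b = 0 ∨ b = 1 ∨ b = 3)) ∨
    (a = 6 ∧ (b = 1 ∨ b = 2)) ∨
    (a = 7 ∧ b = 3) ∨
    (a = 8 ∧ b = 1))

/-- The net plus an isolated vertex: triangle `0,1,2`, pendant vertices `3,4,5`
attached to `0,1,2` respectively, and an isolated vertex `6`. -/
def netStar : SimpleGraph (Fin 7) :=
  SimpleGraph.fromRel (fun a b =>
    (a = 0 ∧ b = 1) ∨ (a = 0 ∧ b = 2) ∨ (a = 1 ∧ b = 2) ∨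
    (a = 3 ∧ b = 0) ∨ (a = 4 ∧ b = 1) ∨ (a = 5 ∧ b = 2))

/-- The graph `W`: the complement of the 4-sun — a clique `0,1,2,3` (= `v1,…,v4`)
plus an independent set `4,5,6,7` (= `u1,…,u4`) with `u_i` adjacent exactly to `v_i`
and `v_{i+1 mod 4}` — together with a new vertex `8` adjacent exactly to `v1 = 0` and
`v3 = 2`. -/
def Wgraph : SimpleGraph (Fin 9) :=
  SimpleGraph.fromRel (fun a b =>
    (a.val < 4 ∧ b.val < 4) ∨
    (4 ≤ a.val ∧ a.val ≤ 7 ∧ (b.val = a.val - 4 ∨ b.val = (a.val - 4 + 1) % 4)) ∨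
    (a = 8 ∧ (b = 0 ∨ b = 2)))

/-- A clique path of a graph `H`: a linear ordering `K_1, …, K_len` of all maximal
cliques of `H` such that for every vertex the cliques containing it are consecutive.
Indices outside `[1, len]` carry the empty set (sentinels). -/
structure CliquePath (H : SimpleGraph V) where
  len : ℕ
  Kc : ℕ → Set V
  sentinel : ∀ i : ℕ, (i = 0 ∨ len < i) → Kc i = ∅
  maxclique : ∀ i : ℕ, 1 ≤ i → i ≤ len → IsMaxCliqueSet H (Kc i)
  surj : ∀ C : Set V, IsMaxCliqueSet H C → ∃ i, 1 ≤ i ∧ i ≤ len ∧ Kc i = C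
  inj : ∀ i j : ℕ, 1 ≤ i → i ≤ len → 1 ≤ j → j ≤ len → Kc i = Kc j → i = j
  consec : ∀ (v : V) (i j k : ℕ), i ≤ j → j ≤ k → v ∈ Kc i → v ∈ Kc k → v ∈ Kc j

/-- A module of a graph: every vertex outside is adjacent to all of it or none of it. -/
def GraphModule (H : SimpleGraph V) (M : Set V) : Prop :=
  ∀ u ∈ M, ∀ v ∈ M, ∀ x ∉ M, (H.Adj x u ↔ H.Adj x v)

/-- A graph is quasi-prime if every nontrivial module is a clique. -/
def QuasiPrime (H : SimpleGraph V) : Prop :=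
  ∀ M : Set V, GraphModule H M → M ≠ Set.univ → ¬ M.Subsingleton → H.IsClique M

/-!
Both sides are equivalent to a point–gap model of `G` on the real line: distinct points for the
vertices of `S`, open gaps for the vertices of `K`, and `v ∈ K` adjacent to `s ∈ S` iff the point
of `s` avoids the gap of `v`.

Given a Helly model, the arcs of `K` share a point `c` (Helly for a maximal clique containing
`K`), and every `N[s]`, `s ∈ S`, is a maximal clique with a Helly point. Cutting the circle at
`c`, the arcs of `K` become complements of intervals, which are the gaps, and the Helly points of
the `N[s]` are the points. Conversely, wrapping the line around the circle turns gaps into arcs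
and points into one-point arcs; a clique meeting `S` shares the point of that vertex, and a
clique inside `K` shares the wrapping point.

In `G^K` the vertices of `S` are independent and two distinct vertices are adjacent iff their
closed neighbourhoods share a vertex of `S`. So given a point–gap model, the hulls of the points
in the gaps form an interval model of `G^K`. Conversely, `N_{G^K}[s]` is a clique for `s ∈ S`, so
its intervals share a point; these points and the intervals of `K`, slightly enlarged, form a
point–gap model.
-/

section SplitCircularArc

open Set

lemma circleArc_eq_image_add (s ℓ : ℝ) :
    circleArc s ℓ = (fun t : ℝ => (s : Circle) + t) '' Icc 0 ℓ := by
  ext p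
  constructor
  · rintro ⟨x, hx, rfl⟩
    exact ⟨x - s, ⟨by linarith [hx.1], by linarith [hx.2]⟩, by simp⟩
  · rintro ⟨t, ht, rfl⟩
    exact ⟨s + t, ⟨by linarith [ht.1], by linarith [ht.2]⟩, by simp⟩

lemma circleArc_congr {s s' : ℝ} (h : (s : Circle) = s') (ℓ : ℝ) :
    circleArc s ℓ = circleArc s' ℓ := by
  rw [circleArc_eq_image_add, circleArc_eq_image_add, h]

lemma circleArc_zero (s : ℝ) : circleArc s 0 = {(s : Circle)} := by
  rw [circleArc, add_zero, Icc_self, image_singleton]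

lemma coe_mem_circleArc_iff {s ℓ y : ℝ} (hy : y ∈ Ico s (s + 1)) :
    (y : Circle) ∈ circleArc s ℓ ↔ y ≤ s + ℓ := by
  refine ⟨?_, fun h => ⟨y, ⟨hy.1, h⟩, rfl⟩⟩
  rintro ⟨x, hx, hxy⟩
  by_cases hℓ : 1 ≤ ℓ
  · linarith [hy.2]
  have hx' : x ∈ Ico s (s + 1) := ⟨hx.1, by linarith [hx.2]⟩
  rw [AddCircle.coe_eq_coe_iff_of_mem_Ico hx' hy] at hxy
  exact hxy ▸ hx.2

lemma exists_Ioo_iff_coe_notMem_circleArc {c s ℓ : ℝ} (hc : (c : Circle) ∈ circleArc s ℓ) :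
    ∃ a b : ℝ, ∀ y ∈ Ico c (c + 1), (y : Circle) ∉ circleArc s ℓ ↔ y ∈ Ioo a b := by
  set s' : ℝ := (AddCircle.equivIoc 1 (c - 1) s : ℝ) with hs'
  have hs'mem : s' ∈ Ioc (c - 1) (c - 1 + 1) := (AddCircle.equivIoc 1 (c - 1) s).2
  rw [circleArc_congr (AddCircle.coe_equivIoc (a := c - 1)).symm ℓ, ← hs'] at hc ⊢
  have hcs' : c ≤ s' + ℓ :=
    (coe_mem_circleArc_iff ⟨hs'mem.2.trans_eq (by ring), by linarith [hs'mem.1]⟩).mp hc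
  refine ⟨s' + ℓ, s' + 1, fun y hy => ?_⟩
  rcases lt_or_ge y (s' + 1) with hys | hys
  · rw [coe_mem_circleArc_iff ⟨by linarith [hy.1, hs'mem.2], hys⟩]
    simp [hys]
  · have hy' : y - 1 ∈ Ico s' (s' + 1) := ⟨by linarith, by linarith [hy.2, hs'mem.1]⟩
    have hcoe : ((y - 1 : ℝ) : Circle) = y := by simp
    rw [← hcoe, coe_mem_circleArc_iff hy']
    exact iff_of_false (not_not.mpr (by linarith [hy.2])) fun h => (not_lt.mpr hys) h.2

lemma coe_mem_circleArc_iff_notMem_Ioo {a b x : ℝ} (ha : 0 ≤ a) (hb₀ : 0 ≤ b) (hb₁ : b ≤ 1)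
    (hx : x ∈ Ico 0 1) : (x : Circle) ∈ circleArc b (1 + a - b) ↔ x ∉ Ioo a b := by
  rcases le_or_gt b x with hbx | hxb
  · rw [coe_mem_circleArc_iff ⟨hbx, by linarith [hx.2]⟩]
    simp only [mem_Ioo, not_and, not_lt]
    exact iff_of_true (by linarith [hx.2]) fun _ => hbx
  · rw [← AddCircle.coe_add_period, coe_mem_circleArc_iff ⟨by linarith [hx.1], by linarith⟩,
      show b + (1 + a - b) = a + 1 by ring, add_le_add_iff_right, mem_Ioo, not_and_or, not_lt,
      not_lt, or_iff_left (not_le.mpr hxb)]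

namespace IsSplitPartition

variable {G : SimpleGraph V} {K S : Set V} (hKS : IsSplitPartition G K S)
include hKS

lemma mem_or_mem (v : V) : v ∈ K ∨ v ∈ S := by
  have hv : v ∈ K ∪ S := hKS.1 ▸ mem_univ v
  exact hv

lemma notMem_of_mem_right {s : V} (hs : s ∈ S) : s ∉ K :=
  fun hsK => disjoint_left.mp hKS.2.1 hsK hs

lemma ne_of_mem_of_mem {v s : V} (hv : v ∈ K) (hs : s ∈ S) : v ≠ s :=
  fun h => hKS.notMem_of_mem_right hs (h ▸ hv)

lemma mem_left_of_adj {s v : V} (hs : s ∈ S) (h : G.Adj s v) : v ∈ K :=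
  (hKS.mem_or_mem v).resolve_right fun hv => hKS.2.2.2 hs hv h.ne h

lemma isMaxCliqueSet_closedNbhd {s : V} (hs : s ∈ S) : IsMaxCliqueSet G (closedNbhd G s) := by
  refine ⟨?_, fun C hC hsub => hsub.antisymm fun x hx => ?_⟩
  · rintro x (rfl | hx) y (rfl | hy) hxy
    exacts [absurd rfl hxy, hy, hx.symm,
      hKS.2.2.1 (hKS.mem_left_of_adj hs hx) (hKS.mem_left_of_adj hs hy) hxy]
  · by_cases hxs : x = s
    · rw [hxs]
      exact mem_insert s _
    · exact mem_insert_of_mem _ (hC (hsub (mem_insert s _)) hx (Ne.symm hxs))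

lemma auxGraph_adj_of_mem_left_of_mem_right {v s : V} (hv : v ∈ K) (hs : s ∈ S) :
    (auxGraph G K).Adj v s ↔ ¬ G.Adj v s := by
  have hsK := hKS.notMem_of_mem_right hs
  have hsub : closedNbhd G s ⊆ closedNbhd G v ↔ G.Adj v s := by
    refine ⟨fun h => ?_, fun h x hx => ?_⟩
    · rcases h (mem_insert s _) with h | h
      exacts [absurd h.symm (hKS.ne_of_mem_of_mem hv hs), h]
    · rcases hx with rfl | hx
      · exact mem_insert_of_mem _ h
      · by_cases hxv : x = v
        · rw [hxv]
          exact mem_insert v _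
        · exact mem_insert_of_mem _ (hKS.2.2.1 hv (hKS.mem_left_of_adj hs hx) (Ne.symm hxv))
  refine ⟨?_, fun h =>
    ⟨hKS.ne_of_mem_of_mem hv hs, .inr (.inr (.inl ⟨hv, hsK, hsub.not.mpr h⟩))⟩⟩
  rintro ⟨-, ⟨-, h, -⟩ | ⟨h, -⟩ | ⟨-, -, h⟩ | ⟨h, -⟩⟩
  exacts [absurd h hsK, absurd hv h, hsub.not.mp h, absurd h hsK]

lemma not_auxGraph_adj_of_mem_right {s t : V} (hs : s ∈ S) (ht : t ∈ S) :
    ¬ (auxGraph G K).Adj s t := by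
  have hsK := hKS.notMem_of_mem_right hs
  rintro ⟨hne, ⟨h, -⟩ | ⟨-, -, h⟩ | ⟨h, -⟩ | ⟨h, -⟩⟩
  exacts [hsK h, hKS.2.2.2 hs ht hne h, hsK h, hKS.notMem_of_mem_right ht h]

lemma auxGraph_adj_of_mem_left {v w : V} (hv : v ∈ K) (hw : w ∈ K) (hne : v ≠ w) :
    (auxGraph G K).Adj v w ↔ ∃ s ∈ S, ¬ G.Adj v s ∧ ¬ G.Adj w s := by
  have hunion : G.neighborSet v ∪ G.neighborSet w ≠ univ ↔
      ∃ s ∈ S, ¬ G.Adj v s ∧ ¬ G.Adj w s := by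
    rw [Ne, eq_univ_iff_forall]
    push Not
    refine ⟨fun ⟨x, hx⟩ => ?_, fun ⟨s, _, hs⟩ => ⟨s, by simpa using hs⟩⟩
    simp only [mem_union, SimpleGraph.mem_neighborSet, not_or] at hx
    refine ⟨x, (hKS.mem_or_mem x).resolve_left fun hxK => ?_, hx⟩
    by_cases hxv : x = v
    · exact hx.2 (hxv ▸ hKS.2.2.1 hw hv hne.symm)
    · exact hx.1 (hKS.2.2.1 hv hxK (Ne.symm hxv))
  refine ⟨?_, fun h => ⟨hne, .inl ⟨hv, hw, hunion.mpr h⟩⟩⟩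
  rintro ⟨-, ⟨-, -, h⟩ | ⟨h, -⟩ | ⟨-, h, -⟩ | ⟨-, h, -⟩⟩
  exacts [hunion.mp h, absurd hv h, absurd hw h, absurd hv h]

lemma mem_closedNbhd_auxGraph_of_mem_left {v s : V} (hv : v ∈ K) (hs : s ∈ S) :
    s ∈ closedNbhd (auxGraph G K) v ↔ ¬ G.Adj v s := by
  rw [closedNbhd, mem_insert_iff, SimpleGraph.mem_neighborSet,
    hKS.auxGraph_adj_of_mem_left_of_mem_right hv hs]
  exact or_iff_right (hKS.ne_of_mem_of_mem hv hs).symm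

lemma mem_closedNbhd_auxGraph_of_mem_right {t s : V} (ht : t ∈ S) (hs : s ∈ S) :
    s ∈ closedNbhd (auxGraph G K) t ↔ s = t := by
  rw [closedNbhd, mem_insert_iff, SimpleGraph.mem_neighborSet]
  exact or_iff_left (hKS.not_auxGraph_adj_of_mem_right ht hs)

lemma isClique_closedNbhd_auxGraph {s : V} (hs : s ∈ S) :
    (auxGraph G K).IsClique (closedNbhd (auxGraph G K) s) := by
  rintro x (rfl | hx) y (rfl | hy) hxy
  · exact absurd rfl hxy
  · exact hy
  · exact hx.symm
  have hxK := (hKS.mem_or_mem x).resolve_right (hKS.not_auxGraph_adj_of_mem_right hs · hx)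
  have hyK := (hKS.mem_or_mem y).resolve_right (hKS.not_auxGraph_adj_of_mem_right hs · hy)
  exact (hKS.auxGraph_adj_of_mem_left hxK hyK hxy).mpr ⟨s, hs,
    (hKS.auxGraph_adj_of_mem_left_of_mem_right hxK hs).mp hx.symm,
    (hKS.auxGraph_adj_of_mem_left_of_mem_right hyK hs).mp hy.symm⟩

lemma auxGraph_adj_iff_exists_mem_closedNbhd {u v : V} (huv : u ≠ v) :
    (auxGraph G K).Adj u v ↔
      ∃ s ∈ S, s ∈ closedNbhd (auxGraph G K) u ∧ s ∈ closedNbhd (auxGraph G K) v := by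
  have key : ∀ u v, u ∈ K → v ∈ S → ((auxGraph G K).Adj u v ↔
      ∃ s ∈ S, s ∈ closedNbhd (auxGraph G K) u ∧ s ∈ closedNbhd (auxGraph G K) v) := by
    intro u v hu hv
    refine ⟨fun h => ⟨v, hv, mem_insert_of_mem _ h, mem_insert v _⟩, ?_⟩
    rintro ⟨s, hs, hsu, hsv⟩
    obtain rfl := (hKS.mem_closedNbhd_auxGraph_of_mem_right hv hs).mp hsv
    exact hsu.resolve_left (hKS.ne_of_mem_of_mem hu hs).symm
  rcases hKS.mem_or_mem u with hu | hu <;> rcases hKS.mem_or_mem v with hv | hv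
  · rw [hKS.auxGraph_adj_of_mem_left hu hv huv]
    refine exists_congr fun s => and_congr_right fun hs => ?_
    rw [hKS.mem_closedNbhd_auxGraph_of_mem_left hu hs,
      hKS.mem_closedNbhd_auxGraph_of_mem_left hv hs]
  · exact key u v hu hv
  · rw [SimpleGraph.adj_comm, key v u hv hu]
    exact exists_congr fun _ => and_congr_right fun _ => and_comm
  · refine iff_of_false (hKS.not_auxGraph_adj_of_mem_right hu hv) ?_
    rintro ⟨s, hs, hsu, hsv⟩
    exact huv (((hKS.mem_closedNbhd_auxGraph_of_mem_right hu hs).mp hsu).symm.trans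
      ((hKS.mem_closedNbhd_auxGraph_of_mem_right hv hs).mp hsv))

end IsSplitPartition

lemma exists_isMaxCliqueSet_superset [Finite V] {G : SimpleGraph V} {C : Set V}
    (hC : G.IsClique C) : ∃ D, C ⊆ D ∧ IsMaxCliqueSet G D := by
  obtain ⟨D, hCD, hD⟩ := Finite.exists_le_maximal hC
  exact ⟨D, hCD, hD.1, fun _ => hD.eq_of_le⟩

lemma CircularArcModel.adj_of_mem_arc {G : SimpleGraph V} (M : CircularArcModel G) {u v : V}
    {x : Circle} (huv : u ≠ v) (hu : x ∈ M.arc u) (hv : x ∈ M.arc v) : G.Adj u v :=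
  (M.adj_iff u v huv).mpr ⟨x, hu, hv⟩

namespace IntervalModel

variable {H : SimpleGraph V} (M : IntervalModel H)

lemma adj_of_mem_ival {u v : V} {x : ℝ} (huv : u ≠ v) (hu : x ∈ M.ival u)
    (hv : x ∈ M.ival v) : H.Adj u v :=
  (M.adj_iff u v huv).mpr ⟨x, hu, hv⟩

lemma lo_le_hi_of_adj {u v : V} (h : H.Adj u v) : M.lo u ≤ M.hi v := by
  obtain ⟨x, hu, hv⟩ := (M.adj_iff u v h.ne).mp h
  exact hu.1.trans hv.2

lemma exists_mem_ival_of_isClique [Finite V] {C : Set V} (hC : H.IsClique C) :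
    ∃ x, ∀ v ∈ C, x ∈ M.ival v := by
  rcases C.eq_empty_or_nonempty with rfl | hne
  · exact ⟨0, by simp⟩
  refine ⟨sSup (M.lo '' C), fun v hv =>
    ⟨le_csSup (toFinite _).bddAbove (mem_image_of_mem _ hv), csSup_le (hne.image _) ?_⟩⟩
  rintro _ ⟨w, hw, rfl⟩
  by_cases hwv : w = v
  · exact hwv ▸ M.lo_le_hi w
  · exact M.lo_le_hi_of_adj (hC hw hv hwv)

end IntervalModel

lemma exists_Ioo_iff_mem_Icc {F : Set ℝ} (hF : F.Finite) (l h : ℝ) :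
    ∃ a b : ℝ, ∀ x ∈ F, x ∈ Ioo a b ↔ x ∈ Icc l h := by
  rcases lt_or_ge h l with hhl | hlh
  · exact ⟨0, 0, fun x _ => by simp [Icc_eq_empty_of_lt hhl]⟩
  have hU : ∀ y ∈ Icc l h, (F \ Icc l h)ᶜ ∈ nhds y := fun y hy =>
    (hF.sdiff.isClosed.isOpen_compl).mem_nhds fun hy' => hy'.2 hy
  obtain ⟨a, hal, ha⟩ := exists_Ioc_subset_of_mem_nhds (hU l ⟨le_rfl, hlh⟩) ⟨l - 1, by linarith⟩
  obtain ⟨b, hhb, hb⟩ := exists_Ico_subset_of_mem_nhds (hU h ⟨hlh, le_rfl⟩) ⟨h + 1, by linarith⟩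
  refine ⟨a, b, fun x hx =>
    ⟨fun hxab => ?_, fun hxI => ⟨hal.trans_le hxI.1, hxI.2.trans_lt hhb⟩⟩⟩
  by_contra hxI
  rcases lt_or_ge x l with hxl | hlx
  · exact ha ⟨hxab.1, hxl.le⟩ ⟨hx, hxI⟩
  · exact hb ⟨(not_le.mp fun hxh => hxI ⟨hlx, hxh⟩).le, hxab.2⟩ ⟨hx, hxI⟩

lemma isIntervalGraph_of_adj_iff_exists_mem {W : Type*} {H : SimpleGraph V} (ρ : W → ℝ)
    (T : V → Set W) (hfin : ∀ u, (T u).Finite) (hne : ∀ u, (T u).Nonempty)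
    (hconv : ∀ u, ∀ w₁ ∈ T u, ∀ w₂ ∈ T u, ∀ w, ρ w₁ ≤ ρ w → ρ w ≤ ρ w₂ → w ∈ T u)
    (hadj : ∀ u v, u ≠ v → (H.Adj u v ↔ ∃ w, w ∈ T u ∧ w ∈ T v)) : IsIntervalGraph H := by
  set lo : V → ℝ := fun u => sInf (ρ '' T u)
  set hi : V → ℝ := fun u => sSup (ρ '' T u)
  have hlo_mem u : lo u ∈ ρ '' T u := ((hne u).image ρ).csInf_mem ((hfin u).image ρ)
  have hhi_mem u : hi u ∈ ρ '' T u := ((hne u).image ρ).csSup_mem ((hfin u).image ρ)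
  have hmem u w (hw : w ∈ T u) : ρ w ∈ Icc (lo u) (hi u) :=
    ⟨csInf_le ((hfin u).image ρ).bddBelow (mem_image_of_mem ρ hw),
      le_csSup ((hfin u).image ρ).bddAbove (mem_image_of_mem ρ hw)⟩
  have hcover u w (hw : ρ w ∈ Icc (lo u) (hi u)) : w ∈ T u := by
    obtain ⟨w₁, hw₁, h₁⟩ := hlo_mem u
    obtain ⟨w₂, hw₂, h₂⟩ := hhi_mem u
    exact hconv u w₁ hw₁ w₂ hw₂ w (h₁ ▸ hw.1) (h₂ ▸ hw.2)
  have hlo_cover u v (h : lo v ∈ Icc (lo u) (hi u)) : ∃ w, w ∈ T u ∧ w ∈ T v := by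
    obtain ⟨w, hw, hwv⟩ := hlo_mem v
    exact ⟨w, hcover u w (hwv ▸ h), hw⟩
  refine ⟨⟨lo, hi, fun u => ?_, fun u v huv => (hadj u v huv).trans ⟨?_, ?_⟩⟩⟩
  · obtain ⟨w, hw⟩ := hne u
    exact (hmem u w hw).1.trans (hmem u w hw).2
  · rintro ⟨w, hwu, hwv⟩
    exact ⟨ρ w, hmem u w hwu, hmem v w hwv⟩
  · rintro ⟨z, hzu, hzv⟩
    rcases le_total (lo u) (lo v) with h | h
    · exact hlo_cover u v ⟨h, hzv.1.trans hzu.2⟩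
    · obtain ⟨w, hwv, hwu⟩ := hlo_cover v u ⟨h, hzu.1.trans hzv.2⟩
      exact ⟨w, hwu, hwv⟩

/-- Only `pt` on `S` and `lft`, `rgt` on `K` matter. -/
structure PointGapModel (G : SimpleGraph V) (K S : Set V) where
  pt : V → ℝ
  lft : V → ℝ
  rgt : V → ℝ
  injOn_pt : InjOn pt S
  not_adj_iff : ∀ v ∈ K, ∀ s ∈ S, ¬ G.Adj v s ↔ pt s ∈ Ioo (lft v) (rgt v)

variable {G : SimpleGraph V} {K S : Set V}

lemma IsHellyCircularArcGraph.nonempty_pointGapModel [Finite V]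
    (hG : IsHellyCircularArcGraph G) (hKS : IsSplitPartition G K S) :
    Nonempty (PointGapModel G K S) := by
  obtain ⟨M, hHelly⟩ := hG
  obtain ⟨C, hKC, hC⟩ := exists_isMaxCliqueSet_superset hKS.2.2.1
  obtain ⟨p, hp⟩ := hHelly C hC
  obtain ⟨c, rfl⟩ := QuotientAddGroup.mk_surjective p
  choose! h hh using fun s (hs : s ∈ S) => hHelly _ (hKS.isMaxCliqueSet_closedNbhd hs)
  have hwin : ∀ v ∈ K, ∃ a b : ℝ,
      ∀ y ∈ Ico c (c + 1), (y : Circle) ∉ M.arc v ↔ y ∈ Ioo a b := by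
    intro v hv
    obtain ⟨s, ℓ, -, hv'⟩ := M.isArc v
    have hcv := hp v (hKC hv)
    rw [hv'] at hcv ⊢
    exact exists_Ioo_iff_coe_notMem_circleArc hcv
  choose! a b hab using hwin
  set pt : V → ℝ := fun s => AddCircle.equivIco 1 c (h s)
  have hpt s : (pt s : Circle) = h s := AddCircle.coe_equivIco
  have hpt_mem s : pt s ∈ Ico c (c + 1) := (AddCircle.equivIco 1 c (h s)).2
  refine ⟨⟨pt, a, b, fun s hs t ht hst => ?_, fun v hv s hs => ?_⟩⟩
  · by_contra hne
    have hts : h t = h s := by rw [← hpt, ← hst, hpt]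
    exact hKS.2.2.2 hs ht hne <| M.adj_of_mem_arc hne (hh s hs s (mem_insert s _))
      (hts ▸ hh t ht t (mem_insert t _))
  · rw [← hab v hv (pt s) (hpt_mem s), hpt, not_iff_not]
    exact ⟨fun hvs => hh s hs v (mem_insert_of_mem _ hvs.symm), fun hsv =>
      M.adj_of_mem_arc (hKS.ne_of_mem_of_mem hv hs) hsv (hh s hs s (mem_insert s _))⟩

lemma IsIntervalGraph.nonempty_pointGapModel [Finite V] (hG : IsIntervalGraph (auxGraph G K))
    (hKS : IsSplitPartition G K S) : Nonempty (PointGapModel G K S) := by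
  obtain ⟨M⟩ := hG
  choose! q hq using fun s (hs : s ∈ S) =>
    M.exists_mem_ival_of_isClique (hKS.isClique_closedNbhd_auxGraph hs)
  choose a b hab using fun v => exists_Ioo_iff_mem_Icc (finite_range q) (M.lo v) (M.hi v)
  refine ⟨⟨q, a, b, fun s hs t ht hst => ?_, fun v hv s hs => ?_⟩⟩
  · by_contra hne
    exact hKS.not_auxGraph_adj_of_mem_right hs ht <|
      M.adj_of_mem_ival hne (hq s hs s (mem_insert s _)) (hst ▸ hq t ht t (mem_insert t _))
  · rw [hab v (q s) (mem_range_self s), ← hKS.auxGraph_adj_of_mem_left_of_mem_right hv hs]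
    exact ⟨fun hvs => hq s hs v (mem_insert_of_mem _ hvs.symm), fun hsv =>
      M.adj_of_mem_ival (hKS.ne_of_mem_of_mem hv hs) hsv (hq s hs s (mem_insert s _))⟩

lemma exists_injective_eqOn_and_lt [Finite V] {f : V → ℝ} {S : Set V} (hf : InjOn f S) :
    ∃ ρ : V → ℝ, Function.Injective ρ ∧ EqOn ρ f S ∧ ∀ s ∈ S, ∀ u ∉ S, ρ s < ρ u := by
  classical
  obtain ⟨B, hB⟩ := (finite_range f).bddAbove
  obtain ⟨n, hn⟩ := exists_injective_nat V
  have hlt s u : f s < B + 1 + n u := by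
    linarith [hB (mem_range_self s), (Nat.cast_nonneg (n u) : (0 : ℝ) ≤ n u)]
  refine ⟨fun u => if u ∈ S then f u else B + 1 + n u, fun u v huv => ?_,
    fun s hs => if_pos hs, fun s hs u hu => ?_⟩
  · by_cases hu : u ∈ S <;> by_cases hv : v ∈ S <;> simp only [hu, hv, if_true, if_false] at huv
    · exact hf hu hv huv
    · exact absurd huv (hlt u v).ne
    · exact absurd huv.symm (hlt v u).ne
    · exact hn (by exact_mod_cast add_left_cancel huv)
  · simp only [if_pos hs, if_neg hu, hlt]

namespace PointGapModel

open Real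

open Classical in
/-- For `v ∈ K`, the arc from `sigmoid (rgt v)` to `sigmoid (lft v) + 1`, i.e. the complement
of the gap after squeezing the line into `(0, 1)`. -/
noncomputable def arc (R : PointGapModel G K S) (v : V) : Set Circle :=
  if v ∈ K then circleArc (sigmoid (R.rgt v)) (1 + sigmoid (R.lft v) - sigmoid (R.rgt v))
  else circleArc (sigmoid (R.pt v)) 0

lemma arc_of_notMem (R : PointGapModel G K S) {v : V} (hv : v ∉ K) :
    R.arc v = {((sigmoid (R.pt v) : ℝ) : Circle)} := by
  rw [arc, if_neg hv, circleArc_zero]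

lemma coe_mem_arc_iff (R : PointGapModel G K S) {v : V} (hv : v ∈ K) {x : ℝ}
    (hx : x ∈ Ico 0 1) :
    (x : Circle) ∈ R.arc v ↔ x ∉ Ioo (sigmoid (R.lft v)) (sigmoid (R.rgt v)) := by
  rw [arc, if_pos hv]
  exact coe_mem_circleArc_iff_notMem_Ioo (sigmoid_nonneg _) (sigmoid_nonneg _)
    (sigmoid_le_one _) hx

lemma zero_mem_arc (R : PointGapModel G K S) {v : V} (hv : v ∈ K) :
    ((0 : ℝ) : Circle) ∈ R.arc v :=
  (R.coe_mem_arc_iff hv ⟨le_rfl, one_pos⟩).mpr fun h => (sigmoid_pos _).not_ge h.1.le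

lemma coe_sigmoid_pt_mem_arc_iff (R : PointGapModel G K S) {v s : V} (hv : v ∈ K)
    (hs : s ∈ S) : ((sigmoid (R.pt s) : ℝ) : Circle) ∈ R.arc v ↔ G.Adj v s := by
  rw [R.coe_mem_arc_iff hv ⟨sigmoid_nonneg _, sigmoid_lt_one _⟩, ← not_iff_not, not_not,
    R.not_adj_iff v hv s hs]
  simp only [mem_Ioo, sigmoid_lt_iff]

noncomputable def toCircularArcModel (R : PointGapModel G K S) (hKS : IsSplitPartition G K S) :
    CircularArcModel G where
  arc := R.arc
  isArc v := by
    by_cases hv : v ∈ K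
    · refine ⟨_, _, ?_, by rw [arc, if_pos hv]⟩
      linarith [sigmoid_pos (R.lft v), sigmoid_lt_one (R.rgt v)]
    · exact ⟨_, _, le_rfl, by rw [arc, if_neg hv]⟩
  adj_iff u v huv := by
    have key : ∀ u v, u ∈ K → v ∈ S → (G.Adj u v ↔ (R.arc u ∩ R.arc v).Nonempty) := by
      intro u v hu hv
      rw [R.arc_of_notMem (hKS.notMem_of_mem_right hv), inter_singleton_nonempty,
        R.coe_sigmoid_pt_mem_arc_iff hu hv]
    have hsig x : sigmoid x ∈ Ico 0 (0 + 1) := by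
      simpa using ⟨sigmoid_nonneg x, sigmoid_lt_one x⟩
    rcases hKS.mem_or_mem u with hu | hu <;> rcases hKS.mem_or_mem v with hv | hv
    · exact iff_of_true (hKS.2.2.1 hu hv huv) ⟨_, R.zero_mem_arc hu, R.zero_mem_arc hv⟩
    · exact key u v hu hv
    · rw [G.adj_comm, inter_comm]
      exact key v u hv hu
    · refine iff_of_false (hKS.2.2.2 hu hv huv) ?_
      rw [R.arc_of_notMem (hKS.notMem_of_mem_right hu),
        R.arc_of_notMem (hKS.notMem_of_mem_right hv), singleton_inter_nonempty,
        mem_singleton_iff, AddCircle.coe_eq_coe_iff_of_mem_Ico (hsig _) (hsig _), sigmoid_inj]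
      exact fun h => huv (R.injOn_pt hu hv h)

lemma isHellyCircularArcGraph (R : PointGapModel G K S) (hKS : IsSplitPartition G K S) :
    IsHellyCircularArcGraph G := by
  refine ⟨R.toCircularArcModel hKS, fun C hC => ?_⟩
  by_cases hCS : ∃ s ∈ C, s ∈ S
  · obtain ⟨s, hsC, hs⟩ := hCS
    refine ⟨((sigmoid (R.pt s) : ℝ) : Circle), fun v hv => ?_⟩
    by_cases hvs : v = s
    · change _ ∈ R.arc v
      rw [hvs, R.arc_of_notMem (hKS.notMem_of_mem_right hs)]
      exact mem_singleton _
    · have hvK := (hKS.mem_or_mem v).resolve_right fun hvS =>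
        hKS.2.2.2 hvS hs hvs (hC.1 hv hsC hvs)
      exact (R.coe_sigmoid_pt_mem_arc_iff hvK hs).mpr (hC.1 hv hsC hvs)
  · push Not at hCS
    exact ⟨_, fun v hv => R.zero_mem_arc ((hKS.mem_or_mem v).resolve_right (hCS v hv))⟩

def inGap (R : PointGapModel G K S) (v : V) : Set V := {s ∈ S | R.pt s ∈ Ioo (R.lft v) (R.rgt v)}

open Classical in
/-- The vertices whose points span the interval of `u` in the model of `G^K`. A vertex of `K`
with an empty gap is isolated in `G^K` and is given a point of its own. -/
noncomputable def cell (R : PointGapModel G K S) (u : V) : Set V :=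
  if u ∈ K ∧ (R.inGap u).Nonempty then R.inGap u else {u}

lemma cell_nonempty (R : PointGapModel G K S) (u : V) : (R.cell u).Nonempty := by
  by_cases hc : u ∈ K ∧ (R.inGap u).Nonempty
  · simpa only [cell, if_pos hc] using hc.2
  · simp only [cell, if_neg hc, singleton_nonempty]

lemma eq_of_mem_cell (R : PointGapModel G K S) {u w : V} (hw : w ∈ R.cell u) (hwS : w ∉ S) :
    w = u := by
  by_cases hc : u ∈ K ∧ (R.inGap u).Nonempty
  · simp only [cell, if_pos hc] at hw
    exact absurd hw.1 hwS
  · simpa only [cell, if_neg hc, mem_singleton_iff] using hw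

lemma mem_cell_iff (R : PointGapModel G K S) (hKS : IsSplitPartition G K S) {u s : V}
    (hs : s ∈ S) : s ∈ R.cell u ↔ s ∈ closedNbhd (auxGraph G K) u := by
  by_cases hc : u ∈ K ∧ (R.inGap u).Nonempty
  · rw [cell, if_pos hc, hKS.mem_closedNbhd_auxGraph_of_mem_left hc.1 hs,
      R.not_adj_iff u hc.1 s hs]
    exact and_iff_right hs
  · simp only [cell, if_neg hc, mem_singleton_iff]
    refine ⟨fun h => h ▸ mem_insert s _, fun h => ?_⟩
    rcases hKS.mem_or_mem u with hu | hu
    · rw [hKS.mem_closedNbhd_auxGraph_of_mem_left hu hs, R.not_adj_iff u hu s hs] at h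
      exact absurd ⟨hu, s, hs, h⟩ hc
    · exact (hKS.mem_closedNbhd_auxGraph_of_mem_right hu hs).mp h

lemma isIntervalGraph_auxGraph [Finite V] (R : PointGapModel G K S)
    (hKS : IsSplitPartition G K S) : IsIntervalGraph (auxGraph G K) := by
  obtain ⟨ρ, hρ_inj, hρ_pt, hρ_lt⟩ := exists_injective_eqOn_and_lt R.injOn_pt
  refine isIntervalGraph_of_adj_iff_exists_mem ρ R.cell (fun _ => toFinite _) R.cell_nonempty
    (fun u w₁ hw₁ w₂ hw₂ w h₁ h₂ => ?_) (fun u v huv => ?_)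
  · by_cases hc : u ∈ K ∧ (R.inGap u).Nonempty
    · simp only [cell, if_pos hc] at hw₁ hw₂ ⊢
      have hwS : w ∈ S := by_contra fun hwS => h₂.not_gt (hρ_lt w₂ hw₂.1 w hwS)
      rw [hρ_pt hw₁.1, hρ_pt hwS] at h₁
      rw [hρ_pt hwS, hρ_pt hw₂.1] at h₂
      exact ⟨hwS, hw₁.2.1.trans_le h₁, h₂.trans_lt hw₂.2.2⟩
    · simp only [cell, if_neg hc, mem_singleton_iff] at hw₁ hw₂ ⊢
      subst hw₁ hw₂
      exact hρ_inj (le_antisymm h₂ h₁)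
  · rw [hKS.auxGraph_adj_iff_exists_mem_closedNbhd huv]
    refine ⟨fun ⟨s, hs, hsu, hsv⟩ => ⟨s, (R.mem_cell_iff hKS hs).mpr hsu,
      (R.mem_cell_iff hKS hs).mpr hsv⟩, fun ⟨w, hwu, hwv⟩ => ?_⟩
    have hwS : w ∈ S := by_contra fun hwS =>
      huv ((R.eq_of_mem_cell hwu hwS).symm.trans (R.eq_of_mem_cell hwv hwS))
    exact ⟨w, hwS, (R.mem_cell_iff hKS hwS).mp hwu, (R.mem_cell_iff hKS hwS).mp hwv⟩

end PointGapModel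

lemma isHellyCircularArcGraph_iff_nonempty_pointGapModel [Finite V]
    (hKS : IsSplitPartition G K S) :
    IsHellyCircularArcGraph G ↔ Nonempty (PointGapModel G K S) :=
  ⟨fun h => h.nonempty_pointGapModel hKS, fun ⟨R⟩ => R.isHellyCircularArcGraph hKS⟩

lemma isIntervalGraph_auxGraph_iff_nonempty_pointGapModel [Finite V]
    (hKS : IsSplitPartition G K S) :
    IsIntervalGraph (auxGraph G K) ↔ Nonempty (PointGapModel G K S) :=
  ⟨fun h => h.nonempty_pointGapModel hKS, fun ⟨R⟩ => R.isIntervalGraph_auxGraph hKS⟩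

end SplitCircularArc

/-- A split graph `G` with split partition `K ⊎ S` is a Helly
circular-arc graph iff the auxiliary graph `G^K` is an interval graph. -/
theorem statement2 {V : Type*} [Fintype V] (G : SimpleGraph V) (K S : Set V)
    (hKS : IsSplitPartition G K S) :
    IsHellyCircularArcGraph G ↔ IsIntervalGraph (auxGraph G K) :=
  (isHellyCircularArcGraph_iff_nonempty_pointGapModel hKS).trans
    (isIntervalGraph_auxGraph_iff_nonempty_pointGapModel hKS).symm

end CAG
end

section
/- Let G be a circular-arc graph and s a simplicial vertex of G. In every normalized circular-arc model of G there is a point of the circle that is covered exactly by the arcs of the vertices of N[s]. -/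
namespace CAG

variable {V : Type*}

theorem mem_closedNbhd_iff {G : SimpleGraph V} {s v : V} :
    v ∈ closedNbhd G s ↔ v = s ∨ G.Adj s v :=
  Iff.rfl

theorem IsSimplicial.closedNbhd_subset_of_adj {G : SimpleGraph V} {s v : V}
    (hs : IsSimplicial G s) (hsv : G.Adj s v) : closedNbhd G s ⊆ closedNbhd G v := by
  intro u hu
  rw [mem_closedNbhd_iff]
  by_cases huv : u = v
  · exact Or.inl huv
  · exact Or.inr (hs (Set.mem_insert_of_mem _ hsv) hu (Ne.symm huv))

theorem CircularArcModel.arc_nonempty {G : SimpleGraph V} (M : CircularArcModel G) (v : V) :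
    (M.arc v).Nonempty := by
  obtain ⟨a, ℓ, hℓ, harc⟩ := M.isArc v
  rw [harc]
  exact ⟨(a : Circle), a, ⟨le_rfl, le_add_of_nonneg_right hℓ⟩, rfl⟩

theorem CircularArcModel.mem_closedNbhd_of_mem_arc {G : SimpleGraph V} (M : CircularArcModel G)
    {s v : V} {p : Circle} (hps : p ∈ M.arc s) (hpv : p ∈ M.arc v) : v ∈ closedNbhd G s := by
  rw [mem_closedNbhd_iff, or_iff_not_imp_left]
  exact fun hvs => (M.adj_iff s v (Ne.symm hvs)).2 ⟨p, hps, hpv⟩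

/-- In a normalized model every neighbour of a simplicial vertex `s` has an arc containing
that of `s`, so any point of the arc of `s` will do. -/
theorem statement4_general {V : Type*} (G : SimpleGraph V) (s : V)
    (hs : IsSimplicial G s) (M : CircularArcModel G) (hM : IsNormalized M) :
    ∃ p : Circle, ∀ v : V, p ∈ M.arc v ↔ v ∈ closedNbhd G s := by
  obtain ⟨p, hps⟩ := M.arc_nonempty s
  refine ⟨p, fun v => ⟨M.mem_closedNbhd_of_mem_arc hps, fun hv => ?_⟩⟩
  rcases mem_closedNbhd_iff.1 hv with rfl | hsv
  · exact hps
  · exact (hM v s hsv.symm).1 (hs.closedNbhd_subset_of_adj hsv) hps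

/-- Let `G` be a circular-arc graph and `s` a simplicial vertex.  In
every normalized circular-arc model of `G` there is a point covered exactly by the
arcs of the vertices of `N[s]`. -/
theorem statement4 {V : Type*} [Fintype V] (G : SimpleGraph V) (s : V)
    (hs : IsSimplicial G s) (M : CircularArcModel G) (hM : IsNormalized M) :
    ∃ p : Circle, ∀ v : V, p ∈ M.arc v ↔ v ∈ closedNbhd G s :=
  statement4_general G s hs M hM

end CAG
end

section
/- Let G be a chordal graph, K a clique of G, and x a simplicial vertex of G with x ∉ K. Then x is a simplicial vertex of the auxiliary graph G^K. -/
namespace CAG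

variable {V : Type*}

/-! If `x` is simplicial then `N[x] ⊆ N[v]` for every `v ∈ N[x]`. So a `G^K`-neighbour
`w ∈ K` of `x`, for which `N[x] ⊈ N[w]`, is not a `G`-neighbour of `x`, and `N[v] ⊈ N[w]`
for every `G`-neighbour `v` of `x`; this settles all pairs in `N_{G^K}[x]` that meet `K`. -/

theorem IsSimplicial.closedNbhd_subset {G : SimpleGraph V} {x v : V} (hx : IsSimplicial G x)
    (hv : v ∈ closedNbhd G x) : closedNbhd G x ⊆ closedNbhd G v := by
  intro w hw
  by_cases hwv : w = v
  · exact Or.inl hwv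
  · exact Or.inr (hx hv hw (Ne.symm hwv))

theorem IsSimplicial.not_adj_of_not_closedNbhd_subset {G : SimpleGraph V} {x w : V}
    (hx : IsSimplicial G x) (hw : ¬ closedNbhd G x ⊆ closedNbhd G w) : ¬ G.Adj w x :=
  fun hwx => hw (hx.closedNbhd_subset (Or.inr hwx.symm))

theorem mem_closedNbhd_auxGraph_of_notMem {G : SimpleGraph V} {K : Set V} {x a : V}
    (hxK : x ∉ K) (ha : a ∈ closedNbhd (auxGraph G K) x) :
    (a ∉ K ∧ a ∈ closedNbhd G x) ∨ (a ∈ K ∧ ¬ closedNbhd G x ⊆ closedNbhd G a) := by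
  rcases ha with rfl | ⟨-, h⟩
  · exact Or.inl ⟨hxK, Set.mem_insert _ _⟩
  rcases h with ⟨hx, -⟩ | ⟨-, haK, hadj⟩ | ⟨hx, -⟩ | ⟨haK, -, hsub⟩
  · exact absurd hx hxK
  · exact Or.inl ⟨haK, Or.inr hadj⟩
  · exact absurd hx hxK
  · exact Or.inr ⟨haK, hsub⟩

theorem statement5_general {V : Type*} (G : SimpleGraph V)
    (K : Set V) (x : V) (hx : IsSimplicial G x) (hxK : x ∉ K) :
    IsSimplicial (auxGraph G K) x := by
  intro u hu v hv huv
  refine ⟨huv, ?_⟩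
  rcases mem_closedNbhd_auxGraph_of_notMem hxK hu with ⟨huK, huN⟩ | ⟨huK, husub⟩ <;>
    rcases mem_closedNbhd_auxGraph_of_notMem hxK hv with ⟨hvK, hvN⟩ | ⟨hvK, hvsub⟩
  · exact Or.inr (Or.inl ⟨huK, hvK, hx huN hvN huv⟩)
  · exact Or.inr (Or.inr (Or.inr
      ⟨hvK, huK, fun h => hvsub ((hx.closedNbhd_subset huN).trans h)⟩))
  · exact Or.inr (Or.inr (Or.inl
      ⟨huK, hvK, fun h => husub ((hx.closedNbhd_subset hvN).trans h)⟩))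
  · refine Or.inl ⟨huK, hvK, fun huniv => ?_⟩
    rcases huniv.symm ▸ Set.mem_univ x with hxu | hxv
    exacts [hx.not_adj_of_not_closedNbhd_subset husub hxu,
      hx.not_adj_of_not_closedNbhd_subset hvsub hxv]

/-- Let `G` be a chordal graph, `K` a clique and `x ∉ K` a simplicial
vertex of `G`.  Then `x` is simplicial in the auxiliary graph `G^K`. -/
theorem statement5 {V : Type*} [Fintype V] (G : SimpleGraph V) (hG : Chordal G)
    (K : Set V) (hK : G.IsClique K) (x : V) (hx : IsSimplicial G x) (hxK : x ∉ K) :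
    IsSimplicial (auxGraph G K) x :=
  statement5_general G K x hx hxK

end CAG
end

section
/- Let G be a split graph with split partition K ⊎ S and with no universal vertex. If the auxiliary graph G^K contains a witnessed induced subgraph isomorphic to a minimal non-interval graph F (a hole, long claw, whipping top, † graph, or ‡ graph), then G^K contains a witnessed induced subgraph isomorphic to F all of whose simplicial vertices belong to S. -/
namespace CAG

variable {V : Type*}

/-!
Let `x` be a simplicial vertex of `F` with `f x ∈ K`. In every minimal non-interval graph, each
neighbour `y` of a simplicial vertex `x` has a neighbour `z` outside `N[x]`. If `f y` were in `S`,
then `f z ∈ K` and the non-adjacent vertices `f x, f z ∈ K` of `G^K` would have the common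
neighbour `f y ∈ S`, which a split partition forbids. So `f` maps `N[x]` onto a maximal clique
of the copy disjoint from `S`, and its witness `w ∈ S` is adjacent in `G^K` exactly to the images
of the neighbours of `x`. Replacing `f x` by `w` yields a witnessed copy with fewer simplicial
vertices mapped into `K`; a witnessed copy minimising their number has none.
-/

section

variable {W : Type*}

section Embeddings

variable {F : SimpleGraph W} {H : SimpleGraph V}

lemma _root_.SimpleGraph.IsClique.image_embedding (f : F ↪g H) {s : Set W} (hs : F.IsClique s) :
    H.IsClique (f '' s) := by
  rintro _ ⟨a, ha, rfl⟩ _ ⟨b, hb, rfl⟩ hne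
  exact f.map_adj_iff.2 (hs ha hb (ne_of_apply_ne f hne))

lemma _root_.SimpleGraph.exists_isClique_maximal_within {A C : Set V} (hA : A.Finite)
    (hCA : C ⊆ A) (hC : H.IsClique C) :
    ∃ D, C ⊆ D ∧ D ⊆ A ∧ H.IsClique D ∧ ∀ D' ⊆ A, H.IsClique D' → D ⊆ D' → D = D' := by
  have hfin : {D | D ⊆ A ∧ H.IsClique D}.Finite := hA.finite_subsets.subset fun _ hD => hD.1
  obtain ⟨D, hCD, ⟨hDA, hD⟩, hmax⟩ := hfin.exists_le_maximal ⟨hCA, hC⟩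
  exact ⟨D, hCD, hDA, hD, fun D' hD'A hD' hDD' => hDD'.antisymm (hmax ⟨hD'A, hD'⟩ hDD')⟩

lemma _root_.SimpleGraph.Embedding.exists_update (f : F ↪g H) (x : W) (w : V)
    (hw : ∀ b ≠ x, w ≠ f b) (hadj : ∀ b ≠ x, H.Adj w (f b) ↔ F.Adj x b) :
    ∃ g : F ↪g H, g x = w ∧ ∀ b ≠ x, g b = f b := by
  classical
  have hinj : Function.Injective (Function.update f x w) := by
    intro a b hab
    by_cases ha : a = x <;> by_cases hb : b = x
    · exact ha.trans hb.symm
    · simp [ha, hb] at hab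
      exact absurd hab (hw b hb)
    · simp [ha, hb] at hab
      exact absurd hab.symm (hw a ha)
    · simpa [ha, hb] using hab
  refine ⟨⟨⟨Function.update f x w, hinj⟩, fun {a b} => ?_⟩, by simp, fun b hb => by simp [hb]⟩
  simp only [Function.Embedding.coeFn_mk]
  by_cases ha : a = x <;> by_cases hb : b = x
  · simp [ha, hb]
  · simpa [ha, hb] using hadj b hb
  · simpa [ha, hb, SimpleGraph.adj_comm] using hadj a ha
  · simp [ha, hb]

end Embeddings

@[simp]
lemma mem_closedNbhd {F : SimpleGraph W} {x z : W} : z ∈ closedNbhd F x ↔ z = x ∨ F.Adj x z :=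
  Iff.rfl

lemma isSimplicial_iff {F : SimpleGraph W} {x : W} :
    IsSimplicial F x ↔
      ∀ ⦃a⦄, (a = x ∨ F.Adj x a) → ∀ ⦃b⦄, (b = x ∨ F.Adj x b) → a ≠ b → F.Adj a b :=
  Iff.rfl

lemma not_isSimplicial_of_adj {F : SimpleGraph W} {x a b : W} (ha : F.Adj x a) (hb : F.Adj x b)
    (hab : a ≠ b) (hn : ¬ F.Adj a b) : ¬ IsSimplicial F x :=
  fun hx => hn (hx (Or.inr ha) (Or.inr hb) hab)

lemma IsSimplicial.map_iso {W' : Type*} {F : SimpleGraph W} {H : SimpleGraph W'} (e : F ≃g H)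
    {x : W} (hx : IsSimplicial F x) : IsSimplicial H (e x) := by
  have himage : closedNbhd H (e x) = e.toEmbedding '' closedNbhd F x := by
    ext u
    obtain ⟨v, rfl⟩ := e.surjective u
    simp [e.map_adj_iff]
  rw [IsSimplicial, himage]
  exact hx.image_embedding e.toEmbedding

/-- A vertex `x` dominates its neighbour `y` when `N[y] ⊆ N[x]`, i.e. when no `z` as below
exists. -/
def NoSimplicialDominatesNeighbor (F : SimpleGraph W) : Prop :=
  ∀ ⦃x y⦄, IsSimplicial F x → F.Adj x y → ∃ z, F.Adj y z ∧ ¬ F.Adj x z ∧ z ≠ x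

lemma NoSimplicialDominatesNeighbor.of_iso {W' : Type*} {F : SimpleGraph W} {H : SimpleGraph W'}
    (e : F ≃g H) (h : NoSimplicialDominatesNeighbor H) : NoSimplicialDominatesNeighbor F := by
  intro x y hx hxy
  obtain ⟨z, hyz, hxz, hzx⟩ := h (hx.map_iso e) (e.map_adj_iff.2 hxy)
  obtain ⟨z, rfl⟩ := e.surjective z
  exact ⟨z, e.map_adj_iff.1 hyz, fun h => hxz (e.map_adj_iff.2 h), fun h => hzx (congrArg e h)⟩

lemma cycleG_adj_iff {n : ℕ} [NeZero n] {a b : Fin n} :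
    (cycleG n).Adj a b ↔ a ≠ b ∧ (b = a + 1 ∨ a = b + 1) := by
  simp only [cycleG, SimpleGraph.fromRel_adj, Fin.ext_iff, Fin.val_add, Fin.val_one',
    Nat.add_mod_mod, eq_comm (a := b.val), eq_comm (a := a.val)]

open Fin.CommRing in
lemma not_isSimplicial_cycleG {n : ℕ} (hn : 4 ≤ n) (x : Fin n) :
    ¬ IsSimplicial (cycleG n) x := by
  have : NeZero n := ⟨by omega⟩
  have h1 : (1 : Fin n) ≠ 0 := by simp [Fin.ext_iff, Nat.mod_eq_of_lt (by omega : 1 < n)]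
  have h2 : (2 : Fin n) ≠ 0 := by simp [Fin.ext_iff, Nat.mod_eq_of_lt (by omega : 2 < n)]
  have h3 : (3 : Fin n) ≠ 0 := by simp [Fin.ext_iff, Nat.mod_eq_of_lt (by omega : 3 < n)]
  refine not_isSimplicial_of_adj (a := x + 1) (b := x - 1) ?_ ?_ ?_ ?_
  · exact cycleG_adj_iff.2 ⟨fun h => h1 (by linear_combination -h), Or.inl rfl⟩
  · exact cycleG_adj_iff.2 ⟨fun h => h1 (by linear_combination h), Or.inr (by ring)⟩
  · exact fun h => h2 (by linear_combination h)
  · rw [cycleG_adj_iff]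
    rintro ⟨-, h | h⟩
    · exact h3 (by linear_combination -h)
    · exact h1 (by linear_combination h)

instance : DecidableRel longClaw.Adj := fun a b =>
  decidable_of_iff _ (SimpleGraph.fromRel_adj _ a b).symm

instance : DecidableRel whippingTop.Adj := fun a b =>
  decidable_of_iff _ (SimpleGraph.fromRel_adj _ a b).symm

lemma noSimplicialDominatesNeighbor_longClaw : NoSimplicialDominatesNeighbor longClaw := by
  simp only [NoSimplicialDominatesNeighbor, isSimplicial_iff]
  decide

lemma noSimplicialDominatesNeighbor_whippingTop :
    NoSimplicialDominatesNeighbor whippingTop := by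
  simp only [NoSimplicialDominatesNeighbor, isSimplicial_iff]
  decide

section DagGraph

open Sum

variable {p : ℕ}

@[simp]
lemma dagGraph_adj_inl_inl {i j : Fin p} :
    (dagGraph p).Adj (inl i) (inl j) ↔ j.val = i.val + 1 ∨ i.val = j.val + 1 := by
  simp only [dagGraph, SimpleGraph.fromRel_adj, ne_eq, inl.injEq, Fin.ext_iff]
  omega

@[simp]
lemma dagGraph_adj_inr_inl {u : Fin 4} {j : Fin p} :
    (dagGraph p).Adj (inr u) (inl j) ↔
      u = 0 ∨ (u = 1 ∧ j.val = 0) ∨ (u = 3 ∧ j.val + 1 = p) := by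
  simp [dagGraph, SimpleGraph.fromRel_adj]

@[simp]
lemma dagGraph_adj_inl_inr {j : Fin p} {u : Fin 4} :
    (dagGraph p).Adj (inl j) (inr u) ↔
      u = 0 ∨ (u = 1 ∧ j.val = 0) ∨ (u = 3 ∧ j.val + 1 = p) := by
  rw [SimpleGraph.adj_comm, dagGraph_adj_inr_inl]

@[simp]
lemma dagGraph_adj_inr_inr {u w : Fin 4} :
    (dagGraph p).Adj (inr u) (inr w) ↔ (u = 0 ∧ w = 2) ∨ (u = 2 ∧ w = 0) := by
  simp only [dagGraph, SimpleGraph.fromRel_adj, ne_eq, inr.injEq]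
  revert u w
  decide

lemma noSimplicialDominatesNeighbor_dagGraph (hp : 2 ≤ p) :
    NoSimplicialDominatesNeighbor (dagGraph p) := by
  rintro (i | u) y hx hxy
  · exfalso
    obtain h0 | hmid | hlast :
        i.val = 0 ∨ (0 < i.val ∧ i.val + 1 < p) ∨ (0 < i.val ∧ i.val + 1 = p) := by omega
    · refine not_isSimplicial_of_adj (a := inr 1) (b := inl ⟨1, by omega⟩) ?_ ?_ ?_ ?_ hx <;>
        simp [Fin.ext_iff] <;> omega
    · refine not_isSimplicial_of_adj (a := inl ⟨i - 1, by omega⟩) (b := inl ⟨i + 1, by omega⟩)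
        ?_ ?_ ?_ ?_ hx <;> simp [Fin.ext_iff] <;> omega
    · refine not_isSimplicial_of_adj (a := inl ⟨i - 1, by omega⟩) (b := inr 3) ?_ ?_ ?_ ?_ hx <;>
        simp [Fin.ext_iff] <;> omega
  · fin_cases u
    · exfalso
      exact not_isSimplicial_of_adj (a := inl ⟨0, by omega⟩) (b := inr 2)
        (by simp) (by simp) (by simp) (by simp) hx
    · exact ⟨inr 0, by rcases y with j | w <;> simp_all, by simp, by simp⟩
    · exact ⟨inl ⟨0, by omega⟩, by rcases y with j | w <;> simp_all, by simp, by simp⟩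
    · exact ⟨inr 0, by rcases y with j | w <;> simp_all, by simp, by simp⟩

end DagGraph

section DdagGraph

open Sum

variable {p : ℕ}

@[simp]
lemma ddagGraph_adj_inl_inl {i j : Fin p} :
    (ddagGraph p).Adj (inl i) (inl j) ↔ j.val = i.val + 1 ∨ i.val = j.val + 1 := by
  simp only [ddagGraph, SimpleGraph.fromRel_adj, ne_eq, inl.injEq, Fin.ext_iff]
  omega

@[simp]
lemma ddagGraph_adj_inr_inl {u : Fin 5} {j : Fin p} :
    (ddagGraph p).Adj (inr u) (inl j) ↔
      u = 0 ∨ u = 1 ∨ (u = 2 ∧ j.val = 0) ∨ (u = 4 ∧ j.val + 1 = p) := by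
  simp [ddagGraph, SimpleGraph.fromRel_adj]

@[simp]
lemma ddagGraph_adj_inl_inr {j : Fin p} {u : Fin 5} :
    (ddagGraph p).Adj (inl j) (inr u) ↔
      u = 0 ∨ u = 1 ∨ (u = 2 ∧ j.val = 0) ∨ (u = 4 ∧ j.val + 1 = p) := by
  rw [SimpleGraph.adj_comm, ddagGraph_adj_inr_inl]

@[simp]
lemma ddagGraph_adj_inr_inr {u w : Fin 5} :
    (ddagGraph p).Adj (inr u) (inr w) ↔
      (u = 0 ∧ w = 1) ∨ (u = 2 ∧ w = 0) ∨ (u = 3 ∧ (w = 0 ∨ w = 1)) ∨ (u = 4 ∧ w = 1) ∨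
        (w = 0 ∧ u = 1) ∨ (w = 2 ∧ u = 0) ∨ (w = 3 ∧ (u = 0 ∨ u = 1)) ∨ (w = 4 ∧ u = 1) := by
  simp only [ddagGraph, SimpleGraph.fromRel_adj, ne_eq, inr.injEq]
  revert u w
  decide

lemma noSimplicialDominatesNeighbor_ddagGraph (hp : 1 ≤ p) :
    NoSimplicialDominatesNeighbor (ddagGraph p) := by
  rintro (i | u) y hx hxy
  · exfalso
    obtain hp1 | h0 | hmid | hlast : p = 1 ∨ (i.val = 0 ∧ 1 < p) ∨
        (0 < i.val ∧ i.val + 1 < p) ∨ (0 < i.val ∧ i.val + 1 = p) := by omega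
    · refine not_isSimplicial_of_adj (a := inr 2) (b := inr 4) ?_ ?_ ?_ ?_ hx <;>
        simp <;> omega
    · refine not_isSimplicial_of_adj (a := inr 2) (b := inl ⟨1, by omega⟩) ?_ ?_ ?_ ?_ hx <;>
        simp [Fin.ext_iff] <;> omega
    · refine not_isSimplicial_of_adj (a := inl ⟨i - 1, by omega⟩) (b := inl ⟨i + 1, by omega⟩)
        ?_ ?_ ?_ ?_ hx <;> simp [Fin.ext_iff] <;> omega
    · refine not_isSimplicial_of_adj (a := inl ⟨i - 1, by omega⟩) (b := inr 4) ?_ ?_ ?_ ?_ hx <;>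
        simp [Fin.ext_iff] <;> omega
  · fin_cases u
    · exfalso
      exact not_isSimplicial_of_adj (a := inr 2) (b := inr 3)
        (by simp) (by simp) (by simp) (by simp) hx
    · exfalso
      exact not_isSimplicial_of_adj (a := inr 3) (b := inr 4)
        (by simp) (by simp) (by simp) (by simp) hx
    · exact ⟨inr 1, by rcases y with j | w <;> (try fin_cases w) <;> simp_all, by simp, by simp⟩
    · exact ⟨inl ⟨0, by omega⟩, by rcases y with j | w <;> (try fin_cases w) <;> simp_all,
        by simp, by simp⟩
    · exact ⟨inr 0, by rcases y with j | w <;> (try fin_cases w) <;> simp_all, by simp, by simp⟩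

end DdagGraph

lemma IsMinimalNonIntervalGraph.noSimplicialDominatesNeighbor {F : SimpleGraph W}
    (hF : IsMinimalNonIntervalGraph F) : NoSimplicialDominatesNeighbor F := by
  rcases hF with ⟨n, hn, ⟨e⟩⟩ | ⟨⟨e⟩⟩ | ⟨⟨e⟩⟩ | ⟨p, hp, ⟨e⟩⟩ | ⟨p, hp, ⟨e⟩⟩
  · exact .of_iso e fun x _ hx _ => absurd hx (not_isSimplicial_cycleG hn x)
  · exact .of_iso e noSimplicialDominatesNeighbor_longClaw
  · exact .of_iso e noSimplicialDominatesNeighbor_whippingTop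
  · exact .of_iso e (noSimplicialDominatesNeighbor_dagGraph hp)
  · exact .of_iso e (noSimplicialDominatesNeighbor_ddagGraph hp)

section SplitPartition

variable {G : SimpleGraph V} {K S : Set V}

lemma IsSplitPartition.mem_or_mem_s9 (h : IsSplitPartition G K S) (v : V) : v ∈ K ∨ v ∈ S :=
  h.1.symm.subset (Set.mem_univ v)

lemma IsSplitPartition.notMem_of_mem (h : IsSplitPartition G K S) {s : V} (hs : s ∈ S) :
    s ∉ K :=
  fun hk => h.2.1.ne_of_mem hk hs rfl

lemma IsSplitPartition.auxGraph_adj_iff (h : IsSplitPartition G K S) {k s : V} (hk : k ∈ K)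
    (hs : s ∈ S) : (auxGraph G K).Adj k s ↔ ¬ G.Adj k s := by
  have hsK := h.notMem_of_mem hs
  constructor
  · rintro ⟨-, ⟨-, hsK', -⟩ | ⟨hkK, -⟩ | ⟨-, -, hsub⟩ | ⟨hsK', -⟩⟩ hks
    · exact hsK hsK'
    · exact hkK hk
    · refine hsub ?_
      rintro t (rfl | hst)
      · exact Or.inr hks
      · rcases h.mem_or_mem_s9 t with htK | htS
        · by_cases htk : t = k
          · exact Or.inl htk
          · exact Or.inr (h.2.2.1 hk htK (Ne.symm htk))
        · exact absurd hst (h.2.2.2 hs htS hst.ne)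
    · exact hsK hsK'
  · intro hks
    refine ⟨h.2.1.ne_of_mem hk hs, Or.inr (Or.inr (Or.inl ⟨hk, hsK, fun hsub => ?_⟩))⟩
    rcases hsub (Set.mem_insert s _) with hsk | hks'
    · exact h.2.1.ne_of_mem hk hs hsk.symm
    · exact hks hks'

lemma IsSplitPartition.not_auxGraph_adj (h : IsSplitPartition G K S) {s t : V} (hs : s ∈ S)
    (ht : t ∈ S) : ¬ (auxGraph G K).Adj s t := by
  rintro ⟨hne, ⟨hsK, -⟩ | ⟨-, -, hst⟩ | ⟨hsK, -⟩ | ⟨htK, -⟩⟩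
  · exact h.notMem_of_mem hs hsK
  · exact h.2.2.2 hs ht hne hst
  · exact h.notMem_of_mem hs hsK
  · exact h.notMem_of_mem ht htK

/-- Non-adjacency of `a, b ∈ K` in `G^K` means that every vertex is a `G`-neighbour of `a` or
of `b`, whereas an `S`-vertex adjacent to a `K`-vertex in `G^K` is not its `G`-neighbour. -/
lemma IsSplitPartition.auxGraph_adj_of_common_adj (h : IsSplitPartition G K S) {a b s : V}
    (ha : a ∈ K) (hb : b ∈ K) (hab : a ≠ b) (hs : s ∈ S) (hsa : (auxGraph G K).Adj s a)
    (hsb : (auxGraph G K).Adj s b) : (auxGraph G K).Adj a b := by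
  refine ⟨hab, Or.inl ⟨ha, hb, fun huniv => ?_⟩⟩
  have hs' : s ∈ G.neighborSet a ∪ G.neighborSet b := huniv ▸ Set.mem_univ s
  rcases hs' with hs' | hs'
  · exact (h.auxGraph_adj_iff ha hs).1 hsa.symm hs'
  · exact (h.auxGraph_adj_iff hb hs).1 hsb.symm hs'

/-- Exchanging `a` for a vertex `w ∈ S` adjacent to all neighbours of `a` keeps the copy
witnessed: a maximal clique of the new copy avoiding `S` either extends to one of the old copy
avoiding `a`, or lies in the neighbourhood of `a` and could be enlarged by `w`. -/
lemma WitnessedCopy.insert_diff_singleton {A : Set V} {a w : V}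
    (hA : WitnessedCopy G K S A) (hAfin : A.Finite) (hwS : w ∈ S)
    (hw : ∀ c ∈ A, (auxGraph G K).Adj a c → (auxGraph G K).Adj w c) :
    WitnessedCopy G K S (insert w (A \ {a})) := by
  intro C hCsub hC hCmax hCS
  have hwC : w ∉ C := fun hwC => Set.disjoint_left.1 hCS hwC hwS
  have hCA : C ⊆ A \ {a} := fun c hc => (hCsub hc).resolve_left fun h => hwC (h ▸ hc)
  obtain ⟨D, hCD, hDA, hD, hDmax⟩ :=
    SimpleGraph.exists_isClique_maximal_within hAfin (hCA.trans Set.sdiff_subset) hC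
  by_cases haD : a ∈ D
  · have hwC' : (auxGraph G K).IsClique (insert w C) := hC.insert fun c hc _ =>
      hw c (hCA hc).1 (hD haD (hCD hc) (Ne.symm (hCA hc).2))
    have := hCmax _ (Set.insert_subset_insert hCA) hwC' (Set.subset_insert w C)
    exact absurd (this ▸ Set.mem_insert w C) hwC
  · obtain rfl : C = D :=
      hCmax D (fun d hd => Or.inr ⟨hDA hd, fun hda => haD (hda ▸ hd)⟩) hD hCD
    exact hA C hDA hD hDmax hCS

end SplitPartition

section MovingSimplicialVertices

variable {G : SimpleGraph V} {K S : Set V} {F : SimpleGraph W}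
  (hKS : IsSplitPartition G K S) (hP : NoSimplicialDominatesNeighbor F)
  (f : F ↪g auxGraph G K) {x : W}

include hKS hP in
lemma map_mem_of_adj_simplicial (hx : IsSimplicial F x) (hxK : f x ∈ K) {y : W}
    (hxy : F.Adj x y) : f y ∈ K := by
  by_contra hyK
  have hyS := (hKS.mem_or_mem_s9 (f y)).resolve_left hyK
  obtain ⟨z, hyz, hxz, hzx⟩ := hP hx hxy
  have hfyz : (auxGraph G K).Adj (f y) (f z) := f.map_adj_iff.2 hyz
  have hzK : f z ∈ K :=
    (hKS.mem_or_mem_s9 _).resolve_right fun hzS => hKS.not_auxGraph_adj hyS hzS hfyz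
  exact hxz <| f.map_adj_iff.1 <| hKS.auxGraph_adj_of_common_adj hxK hzK
    (f.injective.ne (Ne.symm hzx)) hyS (f.map_adj_iff.2 hxy.symm) hfyz

include hKS hP in
lemma witnessed_image_closedNbhd (hf : WitnessedCopy G K S (Set.range f))
    (hx : IsSimplicial F x) (hxK : f x ∈ K) : Witnessed G K S (f '' closedNbhd F x) := by
  refine hf _ (Set.image_subset_range _ _) (hx.image_embedding f) (fun C hCf hC hsub => ?_) ?_
  · refine hsub.antisymm fun u hu => ?_
    obtain ⟨z, rfl⟩ := hCf hu
    have hfx : f x ∈ C := hsub ⟨x, Or.inl rfl, rfl⟩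
    by_cases hzx : z = x
    · exact ⟨z, Or.inl hzx, rfl⟩
    · exact ⟨z, Or.inr (f.map_adj_iff.1 (hC hfx hu (f.injective.ne (Ne.symm hzx)))), rfl⟩
  · rw [Set.disjoint_left]
    rintro _ ⟨z, hz | hxz, rfl⟩ hzS
    · exact hKS.notMem_of_mem hzS (hz ▸ hxK)
    · exact hKS.notMem_of_mem hzS (map_mem_of_adj_simplicial hKS hP f hx hxK hxz)

include hKS hP in
lemma exists_witnessedCopy_update [Finite W] (hf : WitnessedCopy G K S (Set.range f))
    (hx : IsSimplicial F x) (hxK : f x ∈ K) :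
    ∃ g : F ↪g auxGraph G K, WitnessedCopy G K S (Set.range g) ∧ g x ∈ S ∧
      ∀ b ≠ x, g b = f b := by
  obtain ⟨w, hwS, hw⟩ := witnessed_image_closedNbhd hKS hP f hf hx hxK
  have hwx : (auxGraph G K).Adj w (f x) := hw _ ⟨x, Or.inl rfl, rfl⟩
  have hadj : ∀ b ≠ x, (auxGraph G K).Adj w (f b) ↔ F.Adj x b := by
    refine fun b hb => ⟨fun hwb => ?_, fun hxb => hw _ ⟨b, Or.inr hxb, rfl⟩⟩
    rcases hKS.mem_or_mem_s9 (f b) with hbK | hbS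
    · exact f.map_adj_iff.1 <|
        hKS.auxGraph_adj_of_common_adj hxK hbK (f.injective.ne (Ne.symm hb)) hwS hwx hwb
    · exact absurd hwb (hKS.not_auxGraph_adj hwS hbS)
  have hne : ∀ b ≠ x, w ≠ f b := by
    rintro b - rfl
    exact hKS.notMem_of_mem hwS
      (map_mem_of_adj_simplicial hKS hP f hx hxK (f.map_adj_iff.1 hwx).symm)
  obtain ⟨g, hgx, hgb⟩ := f.exists_update x w hne hadj
  have hrange : Set.range g = insert w (Set.range f \ {f x}) := by
    ext u
    constructor
    · rintro ⟨b, rfl⟩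
      by_cases hb : b = x
      · exact Or.inl (hb ▸ hgx)
      · exact Or.inr ⟨⟨b, (hgb b hb).symm⟩, by simpa [hgb b hb] using f.injective.ne hb⟩
    · rintro (rfl | ⟨⟨b, rfl⟩, hb⟩)
      · exact ⟨x, hgx⟩
      · exact ⟨b, hgb b fun h => hb (h ▸ rfl)⟩
  refine ⟨g, ?_, hgx ▸ hwS, hgb⟩
  rw [hrange]
  refine hf.insert_diff_singleton (Set.finite_range f) hwS ?_
  rintro _ ⟨b, rfl⟩ hxb
  exact (hadj b fun h => (h ▸ hxb).ne rfl).2 (f.map_adj_iff.1 hxb)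

end MovingSimplicialVertices

end

theorem statement9_general {V W : Type*} [Fintype W] (G : SimpleGraph V)
    (K S : Set V) (hKS : IsSplitPartition G K S)
    (F : SimpleGraph W) (hF : IsMinimalNonIntervalGraph F)
    (f : F ↪g auxGraph G K) (hf : WitnessedCopy G K S (Set.range f)) :
    ∃ g : F ↪g auxGraph G K, WitnessedCopy G K S (Set.range g) ∧
      ∀ w : W, IsSimplicial F w → g w ∈ S := by
  let simplicialInK (g : F ↪g auxGraph G K) : Set W := {w | IsSimplicial F w ∧ g w ∈ K}
  obtain ⟨g, hg, hmin⟩ := (measure fun g => (simplicialInK g).ncard).wf.has_min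
    {g | WitnessedCopy G K S (Set.range g)} ⟨f, hf⟩
  refine ⟨g, hg, fun x hx => (hKS.mem_or_mem_s9 (g x)).resolve_left fun hxK => ?_⟩
  obtain ⟨g', hg', hg'x, hg'b⟩ :=
    exists_witnessedCopy_update hKS hF.noSimplicialDominatesNeighbor g hg hx hxK
  have hsub : simplicialInK g' ⊂ simplicialInK g := by
    refine (Set.ssubset_iff_of_subset ?_).2 ⟨x, ⟨hx, hxK⟩, fun h => hKS.notMem_of_mem hg'x h.2⟩
    rintro b ⟨hb, hbK⟩
    refine ⟨hb, ?_⟩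
    by_cases hbx : b = x
    · exact absurd (hbx ▸ hbK) (hKS.notMem_of_mem hg'x)
    · exact hg'b b hbx ▸ hbK
  exact hmin g' hg' (Set.ncard_lt_ncard hsub)

/-- Let `G` be a split graph with split partition `K ⊎ S` and no
universal vertex.  If `G^K` contains a witnessed induced copy of a minimal
non-interval graph `F`, then it contains a witnessed induced copy of `F` all of whose
simplicial vertices belong to `S`. -/
theorem statement9 {V W : Type*} [Fintype V] [Fintype W] (G : SimpleGraph V)
    (K S : Set V) (hKS : IsSplitPartition G K S) (hu : ¬ HasUniversalVertex G)
    (F : SimpleGraph W) (hF : IsMinimalNonIntervalGraph F)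
    (f : F ↪g auxGraph G K) (hf : WitnessedCopy G K S (Set.range f)) :
    ∃ g : F ↪g auxGraph G K, WitnessedCopy G K S (Set.range g) ∧
      ∀ w : W, IsSimplicial F w → g w ∈ S :=
  statement9_general G K S hKS F hF f hf

end CAG
end
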